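/- For p ∈ ℝ³ with 0 < ‖p‖ < π, one has tr(exp(hat(p))) = 1 + 2cos(‖p‖), and log(exp(hat(p))) = hat(p), where log(R) = (θ/(2 sin θ))(R − Rᵀ) with θ = arccos((tr R − 1)/2). -/

import Mathlib

open Matrix Real
open scoped Nat

/-- The skew-symmetric "hat" matrix of `p ∈ ℝ³`. -/
def hat (p : Fin 3 → ℝ) : Matrix (Fin 3) (Fin 3) ℝ :=
  !![0, -p 2, p 1; p 2, 0, -p 0; -p 1, p 0, 0]

/-- Euclidean norm on `Fin 3 → ℝ`. -/
noncomputable def nrm (p : Fin 3 → ℝ) : ℝ := Real.sqrt (∑ i, (p i) ^ 2)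

/-- The matrix logarithm: `log R = (θ / (2 sin θ)) (R - Rᵀ)` with
`θ = arccos((tr R - 1)/2)`. -/
noncomputable def matLog (R : Matrix (Fin 3) (Fin 3) ℝ) : Matrix (Fin 3) (Fin 3) ℝ :=
  (Real.arccos ((R.trace - 1) / 2) / (2 * Real.sin (Real.arccos ((R.trace - 1) / 2)))) • (R - Rᵀ)

/-!
Since `hat p ^ 3 = -θ² • hat p` with `θ = ‖p‖`, the odd and even parts of the exponential series
of `hat p` collapse onto the sine and cosine series, which is Rodrigues' formula. As `hat p` is
traceless and skew with `tr (hat p ^ 2) = -2θ²`, the formula gives `tr (exp (hat p)) = 1 + 2 cos θ`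
and `exp (hat p) - (exp (hat p))ᵀ = (2 sin θ / θ) • hat p`. For `0 < θ < π`, `arccos` recovers
`θ` from the trace and `sin θ ≠ 0`, so `matLog` undoes the exponential.
-/

section PowThree

variable {R A : Type*} [CommSemiring R] [Semiring A] [Algebra R A] {a : A} {c : R}

theorem pow_two_mul_add_one_of_pow_three_eq_smul (h : a ^ 3 = c • a) (k : ℕ) :
    a ^ (2 * k + 1) = c ^ k • a := by
  induction k with
  | zero => simp
  | succ k ih =>
    rw [show 2 * (k + 1) + 1 = 2 + (2 * k + 1) by ring, pow_add, ih, mul_smul_comm,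
      ← pow_succ, h, smul_smul, ← pow_succ]

theorem pow_two_mul_add_two_of_pow_three_eq_smul (h : a ^ 3 = c • a) (k : ℕ) :
    a ^ (2 * k + 2) = c ^ k • a ^ 2 := by
  rw [pow_succ, pow_two_mul_add_one_of_pow_three_eq_smul h, smul_mul_assoc, ← sq]

end PowThree

section Rodrigues

variable {𝔸 : Type*} [Ring 𝔸] [Algebra ℝ 𝔸] [TopologicalSpace 𝔸] [ContinuousSMul ℝ 𝔸]
  {a : 𝔸} {θ : ℝ}

theorem hasSum_expSeries_odd_of_pow_three (hθ : θ ≠ 0) (h : a ^ 3 = (-θ ^ 2) • a) :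
    HasSum (fun k : ℕ => ((2 * k + 1)! : ℝ)⁻¹ • a ^ (2 * k + 1)) ((sin θ / θ) • a) := by
  convert ((Real.hasSum_sin θ).div_const θ).smul_const a using 2 with k
  rw [pow_two_mul_add_one_of_pow_three_eq_smul h, smul_smul, neg_pow, ← pow_mul, pow_succ θ]
  congr 1
  field_simp

theorem hasSum_expSeries_even_of_pow_three [IsTopologicalAddGroup 𝔸] (hθ : θ ≠ 0)
    (h : a ^ 3 = (-θ ^ 2) • a) :
    HasSum (fun k : ℕ => ((2 * k)! : ℝ)⁻¹ • a ^ (2 * k))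
      (((1 - cos θ) / θ ^ 2) • a ^ 2 + 1) := by
  have hcos : HasSum (fun k : ℕ => (-1 : ℝ) ^ (k + 1) * θ ^ (2 * (k + 1)) / (2 * (k + 1))!)
      (cos θ - 1) := by
    simpa using (hasSum_nat_add_iff' (f := fun k : ℕ => (-1 : ℝ) ^ k * θ ^ (2 * k) / (2 * k)!)
      1).mpr (Real.hasSum_cos θ)
  have htail : HasSum (fun k : ℕ => ((2 * (k + 1))! : ℝ)⁻¹ • a ^ (2 * (k + 1)))
      (((1 - cos θ) / θ ^ 2) • a ^ 2) := by
    convert (hcos.div_const (-θ ^ 2)).smul_const (a ^ 2) using 2 with k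
    · rw [mul_add_one, pow_two_mul_add_two_of_pow_three_eq_smul h, smul_smul, neg_pow,
        ← pow_mul]
      congr 1
      field_simp
      ring
    · rw [div_neg, ← neg_div, neg_sub]
  simpa using (hasSum_nat_add_iff (f := fun k : ℕ => ((2 * k)! : ℝ)⁻¹ • a ^ (2 * k)) 1).mp htail

/-- Rodrigues' formula. -/
theorem exp_eq_of_pow_three_eq_neg_sq_smul [IsTopologicalRing 𝔸] [T2Space 𝔸] (hθ : θ ≠ 0)
    (h : a ^ 3 = (-θ ^ 2) • a) :
    NormedSpace.exp a = 1 + (sin θ / θ) • a + ((1 - cos θ) / θ ^ 2) • a ^ 2 := by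
  have := HasSum.even_add_odd (f := fun n : ℕ => (n ! : ℝ)⁻¹ • a ^ n)
    (hasSum_expSeries_even_of_pow_three hθ h) (hasSum_expSeries_odd_of_pow_three hθ h)
  rw [congrFun (NormedSpace.exp_eq_tsum ℝ) a, this.tsum_eq]
  abel

end Rodrigues

theorem matLog_eq_of_trace_eq {R A : Matrix (Fin 3) (Fin 3) ℝ} {θ : ℝ} (h0 : 0 < θ) (hπ : θ < π)
    (htr : R.trace = 1 + 2 * cos θ) (hskew : R - Rᵀ = (2 * sin θ / θ) • A) : matLog R = A := by
  have harccos : arccos ((R.trace - 1) / 2) = θ := by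
    rw [htr, add_sub_cancel_left, mul_div_cancel_left₀ _ two_ne_zero, arccos_cos h0.le hπ.le]
  have hsin : sin θ ≠ 0 := (sin_pos_of_pos_of_lt_pi h0 hπ).ne'
  rw [matLog, harccos, hskew, smul_smul, div_mul_div_comm, mul_comm θ, div_self, one_smul]
  exact mul_ne_zero (mul_ne_zero two_ne_zero hsin) h0.ne'

theorem nrm_sq (p : Fin 3 → ℝ) : nrm p ^ 2 = p 0 ^ 2 + p 1 ^ 2 + p 2 ^ 2 := by
  rw [nrm, sq_sqrt (by positivity), Fin.sum_univ_three]

theorem hat_pow_three (p : Fin 3 → ℝ) : hat p ^ 3 = (-nrm p ^ 2) • hat p := by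
  rw [nrm_sq]
  ext i j
  fin_cases i <;> fin_cases j <;>
    simp [hat, pow_succ, Matrix.mul_apply, Fin.sum_univ_succ] <;> ring

theorem trace_hat (p : Fin 3 → ℝ) : (hat p).trace = 0 := by
  simp [hat, Matrix.trace, Fin.sum_univ_succ]

theorem trace_hat_sq (p : Fin 3 → ℝ) : (hat p ^ 2).trace = -2 * nrm p ^ 2 := by
  rw [nrm_sq]
  simp [hat, Matrix.trace, sq, Fin.sum_univ_succ]
  ring

theorem transpose_hat (p : Fin 3 → ℝ) : (hat p)ᵀ = -hat p := by
  ext i j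
  fin_cases i <;> fin_cases j <;> simp [hat]

theorem exp_hat (p : Fin 3 → ℝ) (hp : nrm p ≠ 0) :
    NormedSpace.exp (hat p) =
      1 + (sin (nrm p) / nrm p) • hat p + ((1 - cos (nrm p)) / nrm p ^ 2) • hat p ^ 2 :=
  exp_eq_of_pow_three_eq_neg_sq_smul hp (hat_pow_three p)

theorem trace_exp_hat (p : Fin 3 → ℝ) (hp : nrm p ≠ 0) :
    (NormedSpace.exp (hat p)).trace = 1 + 2 * cos (nrm p) := by
  rw [exp_hat p hp, trace_add, trace_add, trace_smul, trace_smul, trace_hat, trace_hat_sq,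
    trace_one, Fintype.card_fin, smul_eq_mul, smul_eq_mul]
  field_simp
  ring

theorem exp_hat_sub_transpose (p : Fin 3 → ℝ) (hp : nrm p ≠ 0) :
    NormedSpace.exp (hat p) - (NormedSpace.exp (hat p))ᵀ =
      (2 * sin (nrm p) / nrm p) • hat p := by
  rw [exp_hat p hp]
  simp only [transpose_add, transpose_smul, transpose_one, transpose_pow, transpose_hat,
    neg_sq, smul_neg]
  module

/-- For `0 < ‖p‖ < π`, `tr(exp(hat p)) = 1 + 2 cos ‖p‖` and `log(exp(hat p)) = hat p`. -/
theorem matLog_exp_hat (p : Fin 3 → ℝ) (h0 : 0 < nrm p) (hπ : nrm p < Real.pi) :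
    (NormedSpace.exp (hat p)).trace = 1 + 2 * Real.cos (nrm p) ∧
      matLog (NormedSpace.exp (hat p)) = hat p := by
  have htrace := trace_exp_hat p h0.ne'
  exact ⟨htrace, matLog_eq_of_trace_eq h0 hπ htrace (exp_hat_sub_transpose p h0.ne')⟩
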